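/- Let f : ℝⁿ → ℝ be a polynomial of degree d ≥ 2, t₀ ∈ ℝ, a ∈ ℝⁿ, and γ(t) = Σ_{i ≤ D} a_i t^i (D = d^{n-1}) a real analytic arc lying in M_a(f) for t large with ‖γ(t)‖ → ∞ and f(γ(t)) → t₀ as t → ∞. Let γ̂ be the truncation of γ keeping only terms of order ≥ -(d-1)d^{n-1}. Then: (a) ‖γ̂(t)‖ → ∞; (b) f(γ̂(t)) → t₀; (c) (∂f/∂x_i)(γ̂(t)) → 0 for all i; (d) γ̂_j(t)·(∂f/∂x_i)(γ̂(t)) → 0 for all i, j, all limits as t → ∞. -/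

import Mathlib

/-!
Along an arc lying in the Milnor set, `∇f(γ)` is parallel to `γ - a`, so the chain rule ties the
derivative of `f ∘ γ` to that of `h = ‖γ - a‖²`. Both are Laurent polynomials in `t`: `f ∘ γ`
converges, which forces `t (f ∘ γ)' → 0`, and `h → ∞`, which forces `h ≤ 2 t h'` eventually.
Together they give `‖γ‖ ‖∇f(γ)‖ ≤ 8 |t (f ∘ γ)'| → 0`, hence the limits (c), (d) along `γ`.

The coordinates of `γ` have exponents `≤ D = d^{n-1}` and differ from those of `γ̂` only in
exponents `< -E`, `E = (d-1) D`. Writing `uv - u'v' = u (v - v') + (u - u') v'`, a polynomial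
expression of degree `e` in the coordinates changes by exponents `≤ (e-1) D - E - 1 ≤ -1` for
`e ≤ d`, so the truncation preserves all the limits.
-/

open Filter Topology MvPolynomial Set

noncomputable section

/-- The polynomial function `ℝⁿ → ℝ` associated to `P`. -/
def fe (n : ℕ) (P : MvPolynomial (Fin n) ℝ) (x : EuclideanSpace ℝ (Fin n)) : ℝ :=
  MvPolynomial.eval (fun j => x j) P

/-- The Milnor set `M_a(f)`: points where `grad f(x)` and `x - a` are linearly dependent. -/
def Milnor1 (n : ℕ) (P : MvPolynomial (Fin n) ℝ) (a : EuclideanSpace ℝ (Fin n)) :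
    Set (EuclideanSpace ℝ (Fin n)) :=
  {x | ¬ LinearIndependent ℝ ![gradient (fe n P) x, x - a]}

open scoped Pointwise RealInnerProductSpace

theorem tendsto_sum_mul_zpow_div_zpow_of_isGreatest {F : Finset ℤ} {m : ℤ} (c : ℤ → ℝ)
    (hm : IsGreatest F m) :
    Tendsto (fun t : ℝ => (∑ k ∈ F, c k * t ^ k) / t ^ m) atTop (𝓝 (c m)) := by
  have hlim : Tendsto (fun t : ℝ => ∑ k ∈ F, c k * t ^ (k - m)) atTop
      (𝓝 (∑ k ∈ F, if k = m then c k else 0)) := by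
    refine tendsto_finsetSum _ fun k hk => ?_
    rcases (hm.2 hk).lt_or_eq with hlt | rfl
    · simpa [hlt.ne] using tendsto_const_mul_zpow_atTop_zero (c := c k) (sub_neg.2 hlt)
    · simp
  rw [Finset.sum_ite_eq' F m c, if_pos (Finset.mem_coe.1 hm.1)] at hlim
  refine hlim.congr' <| (eventually_gt_atTop 0).mono fun t ht => ?_
  dsimp only
  rw [Finset.sum_div]
  exact Finset.sum_congr rfl fun k _ => by rw [zpow_sub₀ ht.ne', mul_div_assoc]

theorem mul_deriv_eq_sum {f : ℝ → ℝ} {F : Finset ℤ} {c : ℤ → ℝ} {t f't : ℝ}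
    (he : ∀ t, 0 < t → f t = ∑ k ∈ F, c k * t ^ k) (ht : 0 < t) (hf : HasDerivAt f f't t) :
    t * f't = ∑ k ∈ F, k * c k * t ^ k := by
  have hsum : HasDerivAt (fun u : ℝ => ∑ k ∈ F, c k * u ^ k)
      (∑ k ∈ F, c k * (k * t ^ (k - 1))) t :=
    HasDerivAt.fun_sum fun k _ => (hasDerivAt_zpow k t (Or.inl ht.ne')).const_mul (c k)
  rw [hf.unique (hsum.congr_of_eventuallyEq (eventually_gt_nhds ht |>.mono he)), Finset.mul_sum]
  refine Finset.sum_congr rfl fun k _ => ?_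
  rw [zpow_sub_one₀ ht.ne']
  field_simp

def IsLaurentLE (f : ℝ → ℝ) (b : ℤ) : Prop :=
  ∃ (F : Finset ℤ) (c : ℤ → ℝ), (∀ k ∈ F, k ≤ b) ∧ ∀ t, 0 < t → f t = ∑ k ∈ F, c k * t ^ k

theorem isLaurentLE_const (r : ℝ) {b : ℤ} (hb : 0 ≤ b) : IsLaurentLE (fun _ => r) b :=
  ⟨{0}, fun _ => r, by simpa using hb, by simp⟩

namespace IsLaurentLE

variable {f f' g : ℝ → ℝ} {b b' : ℤ}

theorem mono (h : IsLaurentLE f b) (hb : b ≤ b') : IsLaurentLE f b' :=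
  let ⟨F, c, hF, he⟩ := h
  ⟨F, c, fun k hk => (hF k hk).trans hb, he⟩

theorem congr (h : IsLaurentLE f b) (hfg : ∀ t, 0 < t → f t = g t) : IsLaurentLE g b :=
  let ⟨F, c, hF, he⟩ := h
  ⟨F, c, hF, fun t ht => hfg t ht ▸ he t ht⟩

theorem add (hf : IsLaurentLE f b) (hg : IsLaurentLE g b) : IsLaurentLE (fun t => f t + g t) b := by
  classical
  obtain ⟨F, c, hF, hef⟩ := hf
  obtain ⟨G, e, hG, heg⟩ := hg
  refine ⟨F ∪ G, fun k => (if k ∈ F then c k else 0) + (if k ∈ G then e k else 0),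
    fun k hk => (Finset.mem_union.1 hk).elim (hF k) (hG k), fun t ht => ?_⟩
  simp only [add_mul, ite_mul, zero_mul, Finset.sum_add_distrib, Finset.sum_ite_mem,
    Finset.union_inter_cancel_left, Finset.union_inter_cancel_right, hef t ht, heg t ht]

theorem neg (hf : IsLaurentLE f b) : IsLaurentLE (fun t => -f t) b :=
  let ⟨F, c, hF, he⟩ := hf
  ⟨F, fun k => -c k, hF, fun t ht => by simp [he t ht]⟩

theorem sub (hf : IsLaurentLE f b) (hg : IsLaurentLE g b) : IsLaurentLE (fun t => f t - g t) b := by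
  simpa only [sub_eq_add_neg] using hf.add hg.neg

theorem mul (hf : IsLaurentLE f b) (hg : IsLaurentLE g b') :
    IsLaurentLE (fun t => f t * g t) (b + b') := by
  classical
  obtain ⟨F, c, hF, hef⟩ := hf
  obtain ⟨G, e, hG, heg⟩ := hg
  refine ⟨F + G, fun m => ∑ p ∈ (F ×ˢ G).filter (fun p => p.1 + p.2 = m), c p.1 * e p.2,
    fun m hm => ?_, fun t ht => ?_⟩
  · obtain ⟨k, hk, l, hl, rfl⟩ := Finset.mem_add.1 hm
    exact add_le_add (hF k hk) (hG l hl)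
  · have maps : ∀ p ∈ F ×ˢ G, p.1 + p.2 ∈ F + G := fun p hp =>
      Finset.add_mem_add (Finset.mem_product.1 hp).1 (Finset.mem_product.1 hp).2
    calc f t * g t = ∑ p ∈ F ×ˢ G, c p.1 * e p.2 * t ^ (p.1 + p.2) := by
          rw [hef t ht, heg t ht, Finset.sum_mul_sum, Finset.sum_product]
          refine Finset.sum_congr rfl fun i _ => Finset.sum_congr rfl fun j _ => ?_
          rw [zpow_add₀ ht.ne']
          ring
      _ = ∑ m ∈ F + G, ∑ p ∈ (F ×ˢ G).filter (fun p => p.1 + p.2 = m),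
            c p.1 * e p.2 * t ^ (p.1 + p.2) := (Finset.sum_fiberwise_of_maps_to maps _).symm
      _ = _ := by
          refine Finset.sum_congr rfl fun m _ => ?_
          rw [Finset.sum_mul]
          exact Finset.sum_congr rfl fun p hp => by rw [(Finset.mem_filter.1 hp).2]

theorem sum {ι : Type*} (S : Finset ι) {f : ι → ℝ → ℝ} (h : ∀ i ∈ S, IsLaurentLE (f i) b) :
    IsLaurentLE (fun t => ∑ i ∈ S, f i t) b := by
  classical
  induction S using Finset.induction_on with
  | empty => exact ⟨∅, fun _ => 0, by simp, by simp⟩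
  | insert a S ha ih =>
    simp only [Finset.sum_insert ha]
    exact (h a (Finset.mem_insert_self a S)).add (ih fun i hi => h i (Finset.mem_insert_of_mem hi))

theorem tendsto_zero (hf : IsLaurentLE f b) (hb : b < 0) : Tendsto f atTop (𝓝 0) := by
  obtain ⟨F, c, hF, he⟩ := hf
  have : Tendsto (fun t : ℝ => ∑ k ∈ F, c k * t ^ k) atTop (𝓝 (∑ k ∈ F, 0)) :=
    tendsto_finsetSum _ fun k hk => tendsto_const_mul_zpow_atTop_zero ((hF k hk).trans_lt hb)
  rw [Finset.sum_const_zero] at this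
  exact this.congr' <| (eventually_gt_atTop 0).mono fun t ht => (he t ht).symm

theorem exists_coeff_ne_zero (h : IsLaurentLE f b) : ∃ (F : Finset ℤ) (c : ℤ → ℝ),
    (∀ k ∈ F, k ≤ b ∧ c k ≠ 0) ∧ ∀ t, 0 < t → f t = ∑ k ∈ F, c k * t ^ k := by
  classical
  obtain ⟨F, c, hF, he⟩ := h
  refine ⟨F.filter (fun k => c k ≠ 0), c, fun k hk => ⟨hF k (Finset.mem_filter.1 hk).1,
    (Finset.mem_filter.1 hk).2⟩, fun t ht => ?_⟩
  rw [he t ht]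
  exact (Finset.sum_filter_of_ne fun k _ hne => left_ne_zero_of_mul hne).symm

theorem nonpos_of_tendsto {L : ℝ} (h : IsLaurentLE f b) (hL : Tendsto f atTop (𝓝 L)) :
    IsLaurentLE f 0 := by
  obtain ⟨F, c, hF, he⟩ := h.exists_coeff_ne_zero
  refine ⟨F, c, fun k hk => ?_, he⟩
  by_contra! hk0
  set m := F.max' ⟨k, hk⟩
  have hm : IsGreatest (F : Set ℤ) m := ⟨F.max'_mem _, fun j hj => F.le_max' j hj⟩
  have hm0 : 0 < m := hk0.trans_le (F.le_max' k hk)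
  have hlead := tendsto_sum_mul_zpow_div_zpow_of_isGreatest c hm
  have hzero : Tendsto (fun t : ℝ => f t / t ^ m) atTop (𝓝 0) := by
    simpa using hL.div_atTop (tendsto_zpow_atTop_atTop hm0)
  refine (hF m hm.1).2 (tendsto_nhds_unique hlead (hzero.congr' ?_))
  filter_upwards [eventually_gt_atTop 0] with t ht
  rw [he t ht]

theorem tendsto_mul_deriv {L : ℝ} (h : IsLaurentLE f b) (hL : Tendsto f atTop (𝓝 L))
    (hf' : ∀ t, 0 < t → HasDerivAt f (f' t) t) :
    Tendsto (fun t => t * f' t) atTop (𝓝 0) := by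
  obtain ⟨F, c, hF, he⟩ := h.nonpos_of_tendsto hL
  have hsum : Tendsto (fun t : ℝ => ∑ k ∈ F, k * c k * t ^ k) atTop (𝓝 (∑ k ∈ F, 0)) := by
    refine tendsto_finsetSum _ fun k hk => ?_
    rcases (hF k hk).lt_or_eq with hlt | rfl
    · exact tendsto_const_mul_zpow_atTop_zero hlt
    · simp
  rw [Finset.sum_const_zero] at hsum
  exact hsum.congr' <| (eventually_gt_atTop 0).mono fun t ht =>
    (mul_deriv_eq_sum he ht (hf' t ht)).symm

theorem eventually_le_two_mul_mul_deriv (h : IsLaurentLE f b) (hf : Tendsto f atTop atTop)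
    (hf' : ∀ t, 0 < t → HasDerivAt f (f' t) t) :
    ∀ᶠ t in atTop, f t ≤ 2 * (t * f' t) := by
  obtain ⟨F, c, hF, he⟩ := h.exists_coeff_ne_zero
  have hF0 : F.Nonempty := by
    rw [Finset.nonempty_iff_ne_empty]
    rintro rfl
    refine not_tendsto_atTop_of_tendsto_nhds (tendsto_const_nhds (x := (0 : ℝ)) |>.congr' ?_) hf
    filter_upwards [eventually_gt_atTop 0] with t ht
    simp [he t ht]
  set m := F.max' hF0
  have hm : IsGreatest (F : Set ℤ) m := ⟨F.max'_mem _, fun j hj => F.le_max' j hj⟩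
  have hlead : Tendsto (fun t : ℝ => f t / t ^ m) atTop (𝓝 (c m)) :=
    (tendsto_sum_mul_zpow_div_zpow_of_isGreatest c hm).congr' <|
      (eventually_gt_atTop 0).mono fun t ht => by simp only [he t ht]
  -- a nonpositive leading exponent would make `f t / t ^ m ≥ f t` tend to infinity
  have hm1 : 1 ≤ m := by
    by_contra! hm1
    refine not_tendsto_atTop_of_tendsto_nhds hlead (tendsto_atTop_mono' _ ?_ hf)
    filter_upwards [eventually_ge_atTop 1, hf.eventually_ge_atTop 0] with t ht hft
    exact le_div_self hft (zpow_pos (by linarith) m) (zpow_le_one_of_nonpos₀ ht (by omega))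
  have hcm : 0 < c m := by
    refine lt_of_le_of_ne (ge_of_tendsto hlead ?_) (hF m hm.1).2.symm
    filter_upwards [eventually_gt_atTop 0, hf.eventually_ge_atTop 0] with t ht hft
    exact div_nonneg hft (zpow_pos ht m).le
  -- `2 t f' - f = ∑ (2k - 1) c k t^k` has the same leading exponent, with coefficient `> 0`
  have hrest : Tendsto (fun t : ℝ => (∑ k ∈ F, (2 * k - 1) * c k * t ^ k) / t ^ m) atTop
      (𝓝 ((2 * m - 1) * c m)) :=
    tendsto_sum_mul_zpow_div_zpow_of_isGreatest (fun k => (2 * k - 1) * c k) hm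
  have hpos : 0 < (2 * (m : ℝ) - 1) * c m := by
    have : (1 : ℝ) ≤ m := by exact_mod_cast hm1
    exact mul_pos (by linarith) hcm
  filter_upwards [eventually_gt_atTop 0,
    hrest.eventually (eventually_gt_nhds hpos)] with t ht hgt
  have hsum : ∑ k ∈ F, (2 * k - 1) * c k * t ^ k = 2 * (t * f' t) - f t := by
    rw [mul_deriv_eq_sum he ht (hf' t ht), he t ht, Finset.mul_sum, ← Finset.sum_sub_distrib]
    exact Finset.sum_congr rfl fun k _ => by ring
  rw [hsum] at hgt
  linarith [(div_pos_iff_of_pos_right (zpow_pos ht m)).1 hgt]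

end IsLaurentLE

/-- The bounds satisfied by a polynomial expression `f` of degree `e` in the coordinates of a
Laurent arc with exponents `≤ D`, and by the same expression `g` in its truncation at order `-E`. -/
def TruncApprox (D E : ℤ) (e : ℕ) (f g : ℝ → ℝ) : Prop :=
  IsLaurentLE f (e * D) ∧ IsLaurentLE g (e * D) ∧
    IsLaurentLE (fun t => f t - g t) ((e - 1) * D - E - 1)

namespace TruncApprox

variable {D E : ℤ} {e e' : ℕ} {f g f' g' : ℝ → ℝ}

theorem const (r : ℝ) : TruncApprox D E 0 (fun _ => r) (fun _ => r) := by
  refine ⟨?_, ?_, ⟨∅, fun _ => 0, by simp, by simp⟩⟩ <;> simpa using isLaurentLE_const r le_rfl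

theorem zero (e : ℕ) : TruncApprox D E e (fun _ => 0) (fun _ => 0) := by
  refine ⟨?_, ?_, ?_⟩ <;> exact ⟨∅, fun _ => 0, by simp, by simp⟩

theorem add (h : TruncApprox D E e f g) (h' : TruncApprox D E e f' g') :
    TruncApprox D E e (fun t => f t + f' t) (fun t => g t + g' t) :=
  ⟨h.1.add h'.1, h.2.1.add h'.2.1, (h.2.2.add h'.2.2).congr fun t _ => by ring⟩

theorem mul (h : TruncApprox D E e f g) (h' : TruncApprox D E e' f' g') :
    TruncApprox D E (e + e') (fun t => f t * f' t) (fun t => g t * g' t) := by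
  refine ⟨(h.1.mul h'.1).mono (by push_cast; linarith), (h.2.1.mul h'.2.1).mono
    (by push_cast; linarith), ?_⟩
  have hsplit := (h.1.mul h'.2.2).add
    ((h.2.2.mul h'.2.1).mono (b' := e * D + ((e' - 1) * D - E - 1)) (by linarith))
  exact (hsplit.congr fun t _ => by ring).mono (by push_cast; linarith)

theorem mono (hD : 0 ≤ D) (h : TruncApprox D E e f g) (he : e ≤ e') :
    TruncApprox D E e' f g := by
  have he' : (e : ℤ) ≤ e' := by exact_mod_cast he
  exact ⟨h.1.mono (by nlinarith), h.2.1.mono (by nlinarith), h.2.2.mono (by nlinarith)⟩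

theorem pow (h : TruncApprox D E e f g) (k : ℕ) :
    TruncApprox D E (k * e) (fun t => f t ^ k) (fun t => g t ^ k) := by
  induction k with
  | zero => simpa using const (D := D) (E := E) 1
  | succ k ih => simpa only [pow_succ, add_mul, one_mul] using ih.mul h

theorem sum {ι : Type*} (S : Finset ι) {f g : ι → ℝ → ℝ}
    (h : ∀ i ∈ S, TruncApprox D E e (f i) (g i)) :
    TruncApprox D E e (fun t => ∑ i ∈ S, f i t) (fun t => ∑ i ∈ S, g i t) := by
  classical
  induction S using Finset.induction_on with
  | empty => simpa using zero e
  | insert a S ha ih =>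
    simpa only [Finset.sum_insert ha] using
      (h a (Finset.mem_insert_self a S)).add (ih fun i hi => h i (Finset.mem_insert_of_mem hi))

theorem prod {ι : Type*} (S : Finset ι) {f g : ι → ℝ → ℝ} {e : ι → ℕ}
    (h : ∀ i ∈ S, TruncApprox D E (e i) (f i) (g i)) :
    TruncApprox D E (∑ i ∈ S, e i) (fun t => ∏ i ∈ S, f i t) (fun t => ∏ i ∈ S, g i t) := by
  classical
  induction S using Finset.induction_on with
  | empty => simpa using const (D := D) (E := E) 1
  | insert a S ha ih =>
    simpa only [Finset.prod_insert ha, Finset.sum_insert ha] using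
      (h a (Finset.mem_insert_self a S)).mul (ih fun i hi => h i (Finset.mem_insert_of_mem hi))

theorem eval {ι : Type*} [Fintype ι] (hD : 0 ≤ D) {x y : ℝ → ι → ℝ} {Q : MvPolynomial ι ℝ}
    (hQ : Q.totalDegree ≤ e) (hxy : ∀ j, TruncApprox D E 1 (fun t => x t j) (fun t => y t j)) :
    TruncApprox D E e (fun t => eval (x t) Q) (fun t => eval (y t) Q) := by
  simp only [MvPolynomial.eval_eq']
  refine sum _ fun m hm => ?_
  have hmon := (const (D := D) (E := E) (Q.coeff m)).mul
    (prod Finset.univ fun j _ => (hxy j).pow (m j))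
  have hdeg : ∑ j, m j ≤ e := by
    rw [← Finsupp.degree_eq_sum]
    exact (le_totalDegree hm).trans hQ
  exact hmon.mono hD (by simpa using hdeg)

theorem tendsto_sub (h : TruncApprox D E e f g) (he : (e - 1) * D ≤ E) :
    Tendsto (fun t => f t - g t) atTop (𝓝 0) :=
  h.2.2.tendsto_zero (by linarith)

end TruncApprox

theorem MvPolynomial.totalDegree_pderiv_le {σ R : Type*} [CommSemiring R] (i : σ)
    (p : MvPolynomial σ R) : (pderiv i p).totalDegree ≤ p.totalDegree - 1 := by
  classical
  refine Finset.sup_le fun m hm => ?_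
  have hm' : m + Finsupp.single i 1 ∈ p.support := by
    rw [mem_support_iff, coeff_pderiv] at hm
    exact mem_support_iff.2 (left_ne_zero_of_mul hm)
  have := le_totalDegree hm'
  change (m + Finsupp.single i 1).degree ≤ _ at this
  rw [map_add, Finsupp.degree_single] at this
  change m.degree ≤ _
  omega

theorem hasFDerivAt_fe {n : ℕ} (P : MvPolynomial (Fin n) ℝ) (x : EuclideanSpace ℝ (Fin n)) :
    HasFDerivAt (fe n P)
      (∑ i, eval (fun j => x j) (pderiv i P) •
        (EuclideanSpace.proj i : StrongDual ℝ (EuclideanSpace ℝ (Fin n)))) x := by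
  induction P using MvPolynomial.induction_on with
  | C a =>
    have hfun : fe n (C a) = fun _ => a := funext fun y => eval_C a
    simpa [hfun] using hasFDerivAt_const (𝕜 := ℝ) a x
  | add p q hp hq =>
    have hfun : fe n (p + q) = fun y => fe n p y + fe n q y := funext fun y => eval_add
    rw [hfun]
    exact (hp.add hq).congr_fderiv (by simp only [map_add, add_smul, Finset.sum_add_distrib])
  | mul_X p i hp =>
    have hfun : fe n (p * X i) = fun y => fe n p y * y i := funext fun y => by simp [fe]
    rw [hfun]
    refine (hp.mul (EuclideanSpace.proj (𝕜 := ℝ) i).hasFDerivAt).congr_fderiv ?_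
    classical
    simp [Derivation.leibniz, pderiv_X, Pi.single_apply, apply_ite, add_smul,
      Finset.sum_add_distrib, fe, mul_smul, Finset.smul_sum]

theorem gradient_fe_apply {n : ℕ} (P : MvPolynomial (Fin n) ℝ) (x : EuclideanSpace ℝ (Fin n))
    (i : Fin n) : gradient (fe n P) x i = eval (fun j => x j) (pderiv i P) := by
  have hcoord := EuclideanSpace.inner_single_left i (1 : ℝ) (gradient (fe n P) x)
  rw [map_one, one_mul] at hcoord
  rw [← hcoord, real_inner_comm, gradient, InnerProductSpace.toDual_symm_apply,
    (hasFDerivAt_fe P x).fderiv]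
  simp [PiLp.single_apply]

section KeyEstimate

variable {F : Type*} [NormedAddCommGroup F] [InnerProductSpace ℝ F]

theorem norm_mul_norm_le_of_not_linearIndependent {G X v : F} {t : ℝ}
    (hpar : ¬ LinearIndependent ℝ ![G, X]) (hX : X ≠ 0) (ht : 0 ≤ t)
    (hX2 : ‖X‖ ^ 2 ≤ 2 * (t * (2 * ⟪X, v⟫))) :
    ‖X‖ * ‖G‖ ≤ 4 * |t * ⟪G, v⟫| := by
  rw [LinearIndependent.pair_symm_iff, LinearIndependent.pair_iff' hX] at hpar
  obtain ⟨c, rfl⟩ := not_forall_not.1 hpar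
  rw [norm_smul, real_inner_smul_left, Real.norm_eq_abs, abs_mul, abs_mul, abs_of_nonneg ht]
  have hXv : ‖X‖ ^ 2 ≤ 4 * (t * |⟪X, v⟫|) := by
    nlinarith [le_abs_self ⟪X, v⟫]
  nlinarith [abs_nonneg c]

variable [CompleteSpace F]

theorem tendsto_norm_mul_norm_gradient_zero {f : F → ℝ} {γ γ' : ℝ → F} {a : F} {b₁ b₂ : ℤ}
    {t₀ : ℝ} (hf : Differentiable ℝ f) (hγ : ∀ t, 0 < t → HasDerivAt γ (γ' t) t)
    (hfγ : IsLaurentLE (fun t => f (γ t)) b₁) (hdist : IsLaurentLE (fun t => ‖γ t - a‖ ^ 2) b₂)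
    (hpar : ∀ᶠ t in atTop, ¬ LinearIndependent ℝ ![gradient f (γ t), γ t - a])
    (hnorm : Tendsto (fun t => ‖γ t‖) atTop atTop)
    (hlim : Tendsto (fun t => f (γ t)) atTop (𝓝 t₀)) :
    Tendsto (fun t => ‖γ t‖ * ‖gradient f (γ t)‖) atTop (𝓝 0) := by
  have hfγ' : ∀ t, 0 < t → HasDerivAt (fun t => f (γ t)) ⟪gradient f (γ t), γ' t⟫ t :=
    fun t ht => by
      have h := (hf (γ t)).hasFDerivAt.comp_hasDerivAt t (hγ t ht)
      rwa [← InnerProductSpace.toDual_symm_apply] at h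
  have hdist' : ∀ t, 0 < t → HasDerivAt (fun t => ‖γ t - a‖ ^ 2) (2 * ⟪γ t - a, γ' t⟫) t :=
    fun t ht => ((hγ t ht).sub_const a).norm_sq
  have hdist_top : Tendsto (fun t => ‖γ t - a‖ ^ 2) atTop atTop := by
    refine (tendsto_pow_atTop two_ne_zero).comp (tendsto_atTop_mono (fun t => ?_)
      (tendsto_atTop_add_const_right _ (-‖a‖) hnorm))
    linarith [norm_sub_norm_le (γ t) a]
  have hsmall := (hfγ.tendsto_mul_deriv hlim hfγ').abs.const_mul 8
  rw [abs_zero, mul_zero] at hsmall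
  refine squeeze_zero' (.of_forall fun t => by positivity) ?_ hsmall
  filter_upwards [eventually_gt_atTop 0, hpar,
    hdist.eventually_le_two_mul_mul_deriv hdist_top hdist',
    hnorm.eventually_ge_atTop (2 * ‖a‖ + 1)] with t ht hpar hX2 hγa
  have hXa : ‖a‖ + 1 ≤ ‖γ t - a‖ := by linarith [norm_sub_norm_le (γ t) a]
  have hX : γ t - a ≠ 0 := norm_pos_iff.1 (by linarith [norm_nonneg a])
  have hγX : ‖γ t‖ ≤ 2 * ‖γ t - a‖ := by linarith [norm_le_norm_sub_add (γ t) a]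
  calc ‖γ t‖ * ‖gradient f (γ t)‖ ≤ 2 * (‖γ t - a‖ * ‖gradient f (γ t)‖) := by
        nlinarith [norm_nonneg (gradient f (γ t))]
    _ ≤ 2 * (4 * |t * ⟪gradient f (γ t), γ' t⟫|) := by
        have := norm_mul_norm_le_of_not_linearIndependent hpar hX ht.le hX2
        linarith
    _ = _ := by ring

end KeyEstimate

theorem isLaurentLE_sum_zpow_smul_apply {ι : Type*} (S : Finset ℤ) (A : ℤ → EuclideanSpace ℝ ι)
    (j : ι) {b : ℤ} (hS : ∀ i ∈ S, i ≤ b) :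
    IsLaurentLE (fun t => (∑ i ∈ S, t ^ i • A i) j) b :=
  ⟨S, fun i => A i j, hS, fun t _ => by simp [mul_comm]⟩

theorem isLaurentLE_norm_sub_sq {ι : Type*} [Fintype ι] {x : ℝ → EuclideanSpace ℝ ι} {D : ℤ}
    (hD : 0 ≤ D) (hx : ∀ j, IsLaurentLE (fun t => x t j) D) (a : EuclideanSpace ℝ ι) :
    IsLaurentLE (fun t => ‖x t - a‖ ^ 2) (D + D) := by
  refine (IsLaurentLE.sum Finset.univ fun j _ => ?_).congr fun t _ =>
    (EuclideanSpace.real_norm_sq_eq (x t - a)).symm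
  have hj := (hx j).sub (isLaurentLE_const (a j) hD)
  simpa [sq] using hj.mul hj

theorem hasDerivAt_sum_zpow_smul {V : Type*} [NormedAddCommGroup V] [NormedSpace ℝ V]
    (S : Finset ℤ) (A : ℤ → V) {t : ℝ} (ht : t ≠ 0) :
    HasDerivAt (fun t : ℝ => ∑ i ∈ S, t ^ i • A i) (∑ i ∈ S, (i * t ^ (i - 1)) • A i) t :=
  HasDerivAt.fun_sum fun i _ => (hasDerivAt_zpow i t (Or.inl ht)).smul_const (A i)

theorem tendsto_sum_zpow_smul_zero {V : Type*} [NormedAddCommGroup V] [NormedSpace ℝ V]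
    (S : Finset ℤ) (A : ℤ → V) (hS : ∀ i ∈ S, i < 0) :
    Tendsto (fun t : ℝ => ∑ i ∈ S, t ^ i • A i) atTop (𝓝 0) := by
  simpa using tendsto_finsetSum S fun i hi =>
    (tendsto_zpow_atTop_zero (𝕜 := ℝ) (hS i hi)).smul_const (A i)

section TruncatedArc

variable {ι : Type*} {s : Finset ℤ} {A : ℤ → EuclideanSpace ℝ ι} {γ γhat : ℝ → EuclideanSpace ℝ ι}
  {E : ℤ}

theorem sub_eq_sum_filter_lt (hγ : ∀ t, γ t = ∑ i ∈ s, t ^ i • A i)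
    (hγhat : ∀ t, γhat t = ∑ i ∈ s.filter (fun i => -E ≤ i), t ^ i • A i) (t : ℝ) :
    γ t - γhat t = ∑ i ∈ s.filter (fun i => i < -E), t ^ i • A i := by
  rw [hγ, hγhat, ← Finset.sum_filter_add_sum_filter_not s (fun i => -E ≤ i), add_sub_cancel_left]
  simp only [not_le]

theorem truncApprox_apply {D : ℤ} (hγ : ∀ t, γ t = ∑ i ∈ s, t ^ i • A i)
    (hγhat : ∀ t, γhat t = ∑ i ∈ s.filter (fun i => -E ≤ i), t ^ i • A i)
    (hs : ∀ i ∈ s, i ≤ D) (j : ι) :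
    TruncApprox D E 1 (fun t => γ t j) (fun t => γhat t j) := by
  refine ⟨(isLaurentLE_sum_zpow_smul_apply s A j (by simpa using hs)).congr fun t _ => by rw [hγ],
    (isLaurentLE_sum_zpow_smul_apply (s.filter fun i => -E ≤ i) A j fun i hi => by
      simpa using hs i (Finset.mem_filter.1 hi).1).congr fun t _ => by rw [hγhat],
    (isLaurentLE_sum_zpow_smul_apply (s.filter fun i => i < -E) A j fun i hi => ?_).congr
      fun t _ => by rw [← sub_eq_sum_filter_lt hγ hγhat, PiLp.sub_apply]⟩
  have := (Finset.mem_filter.1 hi).2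
  push_cast
  omega

theorem tendsto_sub_zero_of_eq_sum [Fintype ι] (hγ : ∀ t, γ t = ∑ i ∈ s, t ^ i • A i)
    (hγhat : ∀ t, γhat t = ∑ i ∈ s.filter (fun i => -E ≤ i), t ^ i • A i) (hE : 0 ≤ E) :
    Tendsto (fun t => γ t - γhat t) atTop (𝓝 0) := by
  simp only [sub_eq_sum_filter_lt hγ hγhat]
  exact tendsto_sum_zpow_smul_zero (s.filter fun i => i < -E) A fun i hi => by
    have := (Finset.mem_filter.1 hi).2
    omega

end TruncatedArc

theorem tendsto_norm_atTop_of_tendsto_sub {α V : Type*} [SeminormedAddCommGroup V]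
    {l : Filter α} {x y : α → V} (hx : Tendsto (fun t => ‖x t‖) l atTop)
    (hxy : Tendsto (fun t => x t - y t) l (𝓝 0)) : Tendsto (fun t => ‖y t‖) l atTop := by
  refine tendsto_atTop_mono (f := fun t => ‖x t‖ + -‖x t - y t‖) (fun t => ?_)
    (hx.atTop_add hxy.norm.neg)
  simpa using norm_sub_norm_le (x t) (x t - y t)

theorem tendsto_of_tendsto_of_tendsto_sub {α : Type*} {l : Filter α} {f g : α → ℝ} {L : ℝ}
    (hf : Tendsto f l (𝓝 L)) (hfg : Tendsto (fun t => f t - g t) l (𝓝 0)) :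
    Tendsto g l (𝓝 L) := by
  simpa using hf.sub hfg

section Coordinates

variable {α ι : Type*} [Fintype ι] {l : Filter α} {x y : α → EuclideanSpace ℝ ι}

theorem tendsto_mul_apply_zero_of_norm_mul_norm
    (h : Tendsto (fun t => ‖x t‖ * ‖y t‖) l (𝓝 0)) (i j : ι) :
    Tendsto (fun t => x t j * y t i) l (𝓝 0) := by
  refine squeeze_zero_norm (fun t => ?_) h
  rw [norm_mul]
  exact mul_le_mul (PiLp.norm_apply_le _ j) (PiLp.norm_apply_le _ i) (norm_nonneg _)
    (norm_nonneg _)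

theorem tendsto_apply_zero_of_norm_mul_norm (hx : ∀ᶠ t in l, 1 ≤ ‖x t‖)
    (h : Tendsto (fun t => ‖x t‖ * ‖y t‖) l (𝓝 0)) (i : ι) :
    Tendsto (fun t => y t i) l (𝓝 0) := by
  refine squeeze_zero_norm' ?_ h
  filter_upwards [hx] with t ht
  exact (PiLp.norm_apply_le _ i).trans (le_mul_of_one_le_left (norm_nonneg _) ht)

end Coordinates

/-- Properties of the truncation `γ̂` (keeping only terms of order `≥ -(d-1)d^{n-1}`) of an
arc `γ(t) = Σ_{i ≤ d^{n-1}} aᵢ tⁱ` lying in the Milnor set with `‖γ(t)‖ → ∞` and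
`f(γ(t)) → t₀`: (a) `‖γ̂(t)‖ → ∞`; (b) `f(γ̂(t)) → t₀`; (c) `∂f/∂xᵢ(γ̂(t)) → 0`;
(d) `γ̂ⱼ(t) ∂f/∂xᵢ(γ̂(t)) → 0`, all as `t → ∞`. -/
theorem truncation_properties (n d : ℕ) (hd : 2 ≤ d)
    (P : MvPolynomial (Fin n) ℝ) (hdeg : P.totalDegree = d)
    (a : EuclideanSpace ℝ (Fin n)) (t₀ : ℝ)
    (s : Finset ℤ) (A : ℤ → EuclideanSpace ℝ (Fin n))
    (hs : ∀ i ∈ s, i ≤ (d : ℤ) ^ (n - 1))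
    (γ γhat : ℝ → EuclideanSpace ℝ (Fin n))
    (hγ : ∀ t, γ t = ∑ i ∈ s, t ^ i • A i)
    (hγhat : ∀ t, γhat t =
      ∑ i ∈ s.filter (fun i => -(((d : ℤ) - 1) * (d : ℤ) ^ (n - 1)) ≤ i), t ^ i • A i)
    (hM : ∃ R : ℝ, ∀ t > R, γ t ∈ Milnor1 n P a)
    (hnorm : Tendsto (fun t => ‖γ t‖) atTop atTop)
    (hlim : Tendsto (fun t => fe n P (γ t)) atTop (𝓝 t₀)) :
    Tendsto (fun t => ‖γhat t‖) atTop atTop ∧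
    Tendsto (fun t => fe n P (γhat t)) atTop (𝓝 t₀) ∧
    (∀ i : Fin n,
      Tendsto (fun t => MvPolynomial.eval (fun k => γhat t k) (MvPolynomial.pderiv i P))
        atTop (𝓝 0)) ∧
    (∀ i j : Fin n,
      Tendsto (fun t => γhat t j *
          MvPolynomial.eval (fun k => γhat t k) (MvPolynomial.pderiv i P))
        atTop (𝓝 0)) := by
  set D : ℤ := (d : ℤ) ^ (n - 1)
  set E : ℤ := ((d : ℤ) - 1) * D with hE
  have hD : 1 ≤ D := one_le_pow₀ (by omega)
  have hd1 : ((d - 1 : ℕ) : ℤ) = d - 1 := by omega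
  have hpair := truncApprox_apply hγ hγhat hs
  have hval : TruncApprox D E d (fun t => fe n P (γ t)) (fun t => fe n P (γhat t)) :=
    TruncApprox.eval (by omega) hdeg.le hpair
  have hgrad : ∀ i, TruncApprox D E (d - 1) (fun t => eval (fun k => γ t k) (pderiv i P))
      (fun t => eval (fun k => γhat t k) (pderiv i P)) := fun i =>
    TruncApprox.eval (by omega) (hdeg ▸ totalDegree_pderiv_le i P) hpair
  obtain ⟨R, hR⟩ := hM
  have hkey : Tendsto (fun t => ‖γ t‖ * ‖gradient (fe n P) (γ t)‖) atTop (𝓝 0) :=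
    tendsto_norm_mul_norm_gradient_zero (fun x => (hasFDerivAt_fe P x).differentiableAt)
      (fun t ht => (hasDerivAt_sum_zpow_smul s A ht.ne').congr_of_eventuallyEq (.of_forall hγ))
      hval.1 (isLaurentLE_norm_sub_sq (by omega) (fun j => (hpair j).1) a)
      ((eventually_gt_atTop R).mono hR) hnorm hlim
  simp only [← gradient_fe_apply] at hgrad ⊢
  refine ⟨tendsto_norm_atTop_of_tendsto_sub hnorm (tendsto_sub_zero_of_eq_sum hγ hγhat
    (mul_nonneg (by omega) (by omega))), ?_, fun i => ?_, fun i j => ?_⟩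
  · exact tendsto_of_tendsto_of_tendsto_sub hlim (hval.tendsto_sub le_rfl)
  · exact tendsto_of_tendsto_of_tendsto_sub
      (tendsto_apply_zero_of_norm_mul_norm (hnorm.eventually_ge_atTop 1) hkey i)
      ((hgrad i).tendsto_sub (by rw [hd1, hE]; nlinarith))
  · exact tendsto_of_tendsto_of_tendsto_sub (tendsto_mul_apply_zero_of_norm_mul_norm hkey i j)
      (((hpair j).mul (hgrad i)).tendsto_sub (by rw [show 1 + (d - 1) = d by omega]))
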